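/- Let 0 < γ < 1 and let x_1,…,x_n, y_1,…,y_n be nonnegative real numbers. Then Σ_{i=1}^n Σ_{j=1}^n γ^{|i-j|} x_i y_j ≤ (2/(1-γ)) · (Σ_{i=1}^n x_i²)^{1/2} · (Σ_{j=1}^n y_j²)^{1/2}. -/

import Mathlib

/-- **Geometric-decay strengthened Cauchy–Schwarz summation lemma.**
For `0 < γ < 1` and nonnegative reals `x_1,…,x_n`, `y_1,…,y_n`,
`∑_{i=1}^n ∑_{j=1}^n γ^{|i-j|} x_i y_j ≤ (2/(1-γ)) (∑ x_i²)^{1/2} (∑ y_j²)^{1/2}`. -/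
theorem geometric_decay_scs (γ : ℝ) (hγ0 : 0 < γ) (hγ1 : γ < 1)
    (n : ℕ) (x y : ℕ → ℝ) (hx : ∀ i, 0 ≤ x i) (hy : ∀ j, 0 ≤ y j) :
    ∑ i ∈ Finset.Icc 1 n, ∑ j ∈ Finset.Icc 1 n,
        γ ^ ((i : ℤ) - (j : ℤ)).natAbs * x i * y j ≤
      2 / (1 - γ) * Real.sqrt (∑ i ∈ Finset.Icc 1 n, x i ^ 2) *
        Real.sqrt (∑ j ∈ Finset.Icc 1 n, y j ^ 2) := by
  set s := Finset.Icc 1 n with hs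
  have h1γ : 0 < 1 - γ := by linarith
  have hγn : ∀ k : ℕ, (0:ℝ) ≤ γ ^ k := fun k => pow_nonneg hγ0.le k
  -- any finite sub-sum of the geometric series is at most (1 - γ)⁻¹
  have aux : ∀ u : Finset ℕ, ∑ k ∈ u, γ ^ k ≤ (1 - γ)⁻¹ := by
    intro u
    have hsum : Summable (fun k : ℕ => γ ^ k) := summable_geometric_of_lt_one hγ0.le hγ1
    calc ∑ k ∈ u, γ ^ k ≤ ∑' k, γ ^ k := Summable.sum_le_tsum u (fun k _ => hγn k) hsum
      _ = (1 - γ)⁻¹ := tsum_geometric_of_lt_one hγ0.le hγ1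
  -- row sums of the kernel are bounded by 2/(1-γ)
  have row : ∀ i : ℕ, ∑ j ∈ s, γ ^ ((i : ℤ) - (j : ℤ)).natAbs ≤ 2 / (1 - γ) := by
    intro i
    rw [← Finset.sum_filter_add_sum_filter_not s (fun j => j ≤ i)]
    have e1 : ∑ j ∈ s.filter (fun j => j ≤ i), γ ^ ((i : ℤ) - (j : ℤ)).natAbs
        ≤ (1 - γ)⁻¹ := by
      have := aux ((s.filter (fun j => j ≤ i)).image (fun j => i - j))
      rw [Finset.sum_image] at this
      · refine le_trans (le_of_eq ?_) this
        refine Finset.sum_congr rfl fun j hj => ?_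
        have hji : j ≤ i := (Finset.mem_filter.mp hj).2
        congr 1
        omega
      · intro a ha b hb hab
        have ha' : a ≤ i := (Finset.mem_filter.mp ha).2
        have hb' : b ≤ i := (Finset.mem_filter.mp hb).2
        simp only at hab
        omega
    have e2 : ∑ j ∈ s.filter (fun j => ¬ j ≤ i), γ ^ ((i : ℤ) - (j : ℤ)).natAbs
        ≤ (1 - γ)⁻¹ := by
      have := aux ((s.filter (fun j => ¬ j ≤ i)).image (fun j => j - i))
      rw [Finset.sum_image] at this
      · refine le_trans (le_of_eq ?_) this
        refine Finset.sum_congr rfl fun j hj => ?_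
        have hji : ¬ j ≤ i := (Finset.mem_filter.mp hj).2
        congr 1
        omega
      · intro a ha b hb hab
        have ha' : ¬ a ≤ i := (Finset.mem_filter.mp ha).2
        have hb' : ¬ b ≤ i := (Finset.mem_filter.mp hb).2
        simp only at hab
        omega
    have : (1 - γ)⁻¹ + (1 - γ)⁻¹ = 2 / (1 - γ) := by
      rw [div_eq_mul_inv]; ring
    linarith
  -- Cauchy-Schwarz on the product index set
  set d : ℕ × ℕ → ℕ := fun p => ((p.1 : ℤ) - (p.2 : ℤ)).natAbs with hd
  set f : ℕ × ℕ → ℝ := fun p => Real.sqrt (γ ^ d p) * x p.1 with hf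
  set g : ℕ × ℕ → ℝ := fun p => Real.sqrt (γ ^ d p) * y p.2 with hg
  have hLHS : ∑ i ∈ s, ∑ j ∈ s, γ ^ ((i : ℤ) - (j : ℤ)).natAbs * x i * y j
      = ∑ p ∈ s ×ˢ s, f p * g p := by
    rw [Finset.sum_product]
    refine Finset.sum_congr rfl fun i _ => Finset.sum_congr rfl fun j _ => ?_
    simp only [hf, hg, hd]
    rw [show Real.sqrt (γ ^ ((i:ℤ)-(j:ℤ)).natAbs) * x i *
          (Real.sqrt (γ ^ ((i:ℤ)-(j:ℤ)).natAbs) * y j)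
        = (Real.sqrt (γ ^ ((i:ℤ)-(j:ℤ)).natAbs) * Real.sqrt (γ ^ ((i:ℤ)-(j:ℤ)).natAbs))
          * x i * y j by ring,
      Real.mul_self_sqrt (hγn _)]
  have hfsq : ∑ p ∈ s ×ˢ s, f p ^ 2 ≤ 2 / (1 - γ) * ∑ i ∈ s, x i ^ 2 := by
    have : ∑ p ∈ s ×ˢ s, f p ^ 2
        = ∑ i ∈ s, x i ^ 2 * ∑ j ∈ s, γ ^ ((i : ℤ) - (j : ℤ)).natAbs := by
      rw [Finset.sum_product]
      refine Finset.sum_congr rfl fun i _ => ?_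
      rw [Finset.mul_sum]
      refine Finset.sum_congr rfl fun j _ => ?_
      simp only [hf, hd, mul_pow, Real.sq_sqrt (hγn _)]
      ring
    rw [this, Finset.mul_sum]
    refine Finset.sum_le_sum fun i _ => ?_
    rw [mul_comm (2 / (1 - γ))]
    exact mul_le_mul_of_nonneg_left (row i) (sq_nonneg _)
  have hgsq : ∑ p ∈ s ×ˢ s, g p ^ 2 ≤ 2 / (1 - γ) * ∑ j ∈ s, y j ^ 2 := by
    have : ∑ p ∈ s ×ˢ s, g p ^ 2
        = ∑ j ∈ s, y j ^ 2 * ∑ i ∈ s, γ ^ ((j : ℤ) - (i : ℤ)).natAbs := by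
      rw [Finset.sum_product, Finset.sum_comm]
      refine Finset.sum_congr rfl fun j _ => ?_
      rw [Finset.mul_sum]
      refine Finset.sum_congr rfl fun i _ => ?_
      simp only [hg, hd, mul_pow, Real.sq_sqrt (hγn _)]
      rw [show ((i:ℤ) - (j:ℤ)).natAbs = ((j:ℤ) - (i:ℤ)).natAbs by omega]
      ring
    rw [this, Finset.mul_sum]
    refine Finset.sum_le_sum fun j _ => ?_
    rw [mul_comm (2 / (1 - γ))]
    exact mul_le_mul_of_nonneg_left (row j) (sq_nonneg _)
  have hCS := Finset.sum_mul_sq_le_sq_mul_sq (s ×ˢ s) f g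
  have hLnn : 0 ≤ ∑ p ∈ s ×ˢ s, f p * g p := by
    refine Finset.sum_nonneg fun p _ => ?_
    exact mul_nonneg (mul_nonneg (Real.sqrt_nonneg _) (hx _))
      (mul_nonneg (Real.sqrt_nonneg _) (hy _))
  have hfnn : 0 ≤ ∑ p ∈ s ×ˢ s, f p ^ 2 := Finset.sum_nonneg fun p _ => sq_nonneg _
  have hgnn : 0 ≤ ∑ p ∈ s ×ˢ s, g p ^ 2 := Finset.sum_nonneg fun p _ => sq_nonneg _
  have hxnn : 0 ≤ ∑ i ∈ s, x i ^ 2 := Finset.sum_nonneg fun i _ => sq_nonneg _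
  have hynn : 0 ≤ ∑ j ∈ s, y j ^ 2 := Finset.sum_nonneg fun j _ => sq_nonneg _
  have hc : (0:ℝ) ≤ 2 / (1 - γ) := by positivity
  rw [hLHS]
  have hsq : (∑ p ∈ s ×ˢ s, f p * g p) ^ 2
      ≤ (2 / (1 - γ) * ∑ i ∈ s, x i ^ 2) * (2 / (1 - γ) * ∑ j ∈ s, y j ^ 2) :=
    le_trans hCS (mul_le_mul hfsq hgsq hgnn (by positivity))
  calc ∑ p ∈ s ×ˢ s, f p * g p
      = Real.sqrt ((∑ p ∈ s ×ˢ s, f p * g p) ^ 2) := (Real.sqrt_sq hLnn).symm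
    _ ≤ Real.sqrt ((2 / (1 - γ) * ∑ i ∈ s, x i ^ 2) *
          (2 / (1 - γ) * ∑ j ∈ s, y j ^ 2)) := Real.sqrt_le_sqrt hsq
    _ = 2 / (1 - γ) * Real.sqrt (∑ i ∈ s, x i ^ 2) * Real.sqrt (∑ j ∈ s, y j ^ 2) := by
        rw [show (2 / (1 - γ) * ∑ i ∈ s, x i ^ 2) * (2 / (1 - γ) * ∑ j ∈ s, y j ^ 2)
            = (2 / (1 - γ) * Real.sqrt (∑ i ∈ s, x i ^ 2) *
                Real.sqrt (∑ j ∈ s, y j ^ 2)) ^ 2 by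
          rw [mul_pow, mul_pow, Real.sq_sqrt hxnn, Real.sq_sqrt hynn]; ring]
        exact Real.sqrt_sq (by positivity)
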